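/- arXiv:1602.07531 — 2 statements merged into one kernel-verified Lean document; each statement's English description precedes it below -/
import Mathlib

section
/- Let n ≥ 3, let S ⊆ ℝⁿ be an n-simplex, and let C ⊆ ℝⁿ be a convex body with nonempty interior such that C − C = S − S. Then C is not perfect, i.e., there exists a convex body that is complete with respect to C but not of constant width with respect to C. -/
open Pointwise

/-- Euclidean n-space. -/
abbrev Euc (n : ℕ) : Type := EuclideanSpace ℝ (Fin n)

/-- A convex body: a nonempty compact convex subset of ℝⁿ. -/
def IsBody {n : ℕ} (K : Set (Euc n)) : Prop := Convex ℝ K ∧ IsCompact K ∧ K.Nonempty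

/-- Support function `h(K,u) = sup_{x ∈ K} ⟨u,x⟩`. -/
noncomputable def suppF {n : ℕ} (K : Set (Euc n)) (u : Euc n) : ℝ :=
  sSup ((fun x => (inner ℝ u x : ℝ)) '' K)

/-- The s-breadth `b_s(K,C) = 2 h(K-K,s) / h(C-C,s)` (here `K - K` is the pointwise
(Minkowski) difference body). -/
noncomputable def breadthF {n : ℕ} (K C : Set (Euc n)) (s : Euc n) : ℝ :=
  2 * suppF (K - K) s / suppF (C - C) s

/-- The diameter `D(K,C) = sup_{s ≠ 0} b_s(K,C)`. -/
noncomputable def diamF {n : ℕ} (K C : Set (Euc n)) : ℝ :=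
  sSup {d : ℝ | ∃ s : Euc n, s ≠ 0 ∧ d = breadthF K C s}

/-- The minimal width `w(K,C) = inf_{s ≠ 0} b_s(K,C)`. -/
noncomputable def widthF {n : ℕ} (K C : Set (Euc n)) : ℝ :=
  sInf {d : ℝ | ∃ s : Euc n, s ≠ 0 ∧ d = breadthF K C s}

/-- The circumradius `R(K,C) = inf {λ ≥ 0 : ∃ c, K ⊆ c + λ•C}`. -/
noncomputable def circumF {n : ℕ} (K C : Set (Euc n)) : ℝ :=
  sInf {l : ℝ | 0 ≤ l ∧ ∃ c : Euc n, K ⊆ c +ᵥ l • C}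

/-- The inradius `r(K,C) = sup {λ ≥ 0 : ∃ c, c + λ•C ⊆ K}`. -/
noncomputable def inradF {n : ℕ} (K C : Set (Euc n)) : ℝ :=
  sSup {l : ℝ | 0 ≤ l ∧ ∃ c : Euc n, c +ᵥ l • C ⊆ K}

/-- `K` is (diametrically) complete with respect to `C`. -/
def CompleteWrt {n : ℕ} (K C : Set (Euc n)) : Prop :=
  ∀ K' : Set (Euc n), IsBody K' → K ⊂ K' → diamF K C < diamF K' C

/-- `K` is reduced with respect to `C`. -/
def ReducedWrt {n : ℕ} (K C : Set (Euc n)) : Prop :=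
  ∀ K' : Set (Euc n), IsBody K' → K' ⊂ K → widthF K' C < widthF K C

/-- `K` is of constant width with respect to `C`. -/
def ConstWidthWrt {n : ℕ} (K C : Set (Euc n)) : Prop := widthF K C = diamF K C

/-- `C` is perfect: every complete body is of constant width. -/
def PerfectBody {n : ℕ} (C : Set (Euc n)) : Prop :=
  ∀ K : Set (Euc n), IsBody K → CompleteWrt K C → ConstWidthWrt K C

/-- A polytope: the convex hull of finitely many points. -/
def IsPolytope {n : ℕ} (P : Set (Euc n)) : Prop :=
  ∃ V : Finset (Euc n), P = convexHull ℝ (V : Set (Euc n))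

/-- An n-simplex: the convex hull of n+1 affinely independent points. -/
def IsSimplex {n : ℕ} (S : Set (Euc n)) : Prop :=
  ∃ p : Fin (n + 1) → Euc n, AffineIndependent ℝ p ∧ S = convexHull ℝ (Set.range p)

/-- The Minkowski asymmetry `s(K) = R(-K,K)`. -/
noncomputable def minkAsym {n : ℕ} (K : Set (Euc n)) : ℝ := circumF (-K) K

/-- `K` is Minkowski-centered: `-K ⊆ s(K) • K`. -/
def MinkCentered {n : ℕ} (K : Set (Euc n)) : Prop := -K ⊆ minkAsym K • K

/-- Optimal containment `A ⊆^opt B`. -/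
def SubsetOpt {n : ℕ} (A B : Set (Euc n)) : Prop :=
  A ⊆ B ∧ ∀ ρ : ℝ, ρ < 1 → ∀ c : Euc n, ¬ (A ⊆ c +ᵥ ρ • B)

/-- The face of `P` with outer normal `a`. -/
noncomputable def faceOf {n : ℕ} (P : Set (Euc n)) (a : Euc n) : Set (Euc n) :=
  {x ∈ P | (inner ℝ a x : ℝ) = suppF P a}

/-- `F` is a facet (an (n-1)-dimensional face) of `P`. -/
def IsFacetOf {n : ℕ} (P F : Set (Euc n)) : Prop :=
  ∃ a : Euc n, a ≠ 0 ∧ F = faceOf P a ∧ Module.finrank ℝ (vectorSpan ℝ F) = n - 1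

/-- `Kstar` is a completion of `K` with respect to `C`. -/
def IsCompletionOf {n : ℕ} (Kstar K C : Set (Euc n)) : Prop :=
  IsBody Kstar ∧ K ⊆ Kstar ∧ diamF Kstar C = diamF K C ∧ CompleteWrt Kstar C

/-!
Breadths with respect to `C` only involve `C - C`, so we may take `C = S`. Let `λ₀, …, λₙ` be
the barycentric coordinates of `S`, `t = 1/(n-1)`, and
`K = {x | -t ≤ λ₀ x ≤ 1 - t, and λₖ x ≥ 0, λ₀ x + λₖ x ≥ 0 for k ≠ 0}`.
For `x, y ∈ K` and every index set `J`, `∑_{i ∈ J} (λᵢ x - λᵢ y) ≤ 1`, which is exactly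
`K - K ⊆ S - S`; hence `D(K, S) = 2`, attained in the direction of `λ₀`. Using `∑ λᵢ = 1`,
each defining inequality of `K` reads `∑_{i ∈ J} λᵢ ≤ c` for some `J`, and some `y ∈ K` (the
apex, a vertex, or a point on an edge at the vertex `λ₀ = 1`) has `∑_{i ∈ J} λᵢ y = c - 1`;
so a point outside `K` has breadth larger than `2` with `y` in that direction, and `K` is
complete. In the direction of `λ₀ - λ₁`, however, `h(S - S) = 2` while `h(K - K) ≤ 2 - t`
(because `λ₀ - λ₁ ≥ (λ₀ + λ₂) + (λ₀ + λ₃) - 1 ≥ -1` on `K`, using `n ≥ 3`), so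
`w(K, S) < 2`.
-/

open scoped RealInnerProductSpace

namespace SimplexNotPerfect

variable {n : ℕ}

theorem isCompact_sub_self {A : Set (Euc n)} (hA : IsCompact A) : IsCompact (A - A) := by
  rw [sub_eq_add_neg]
  exact hA.add hA.neg

section SupportFunction

variable {A B : Set (Euc n)}

theorem le_suppF (hA : IsCompact A) {x : Euc n} (hx : x ∈ A) (s : Euc n) :
    ⟪s, x⟫ ≤ suppF A s :=
  le_csSup (hA.bddAbove_image (continuous_const.inner continuous_id).continuousOn) ⟨x, hx, rfl⟩

theorem suppF_le (hA : A.Nonempty) {s : Euc n} {c : ℝ} (h : ∀ x ∈ A, ⟪s, x⟫ ≤ c) :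
    suppF A s ≤ c :=
  csSup_le (hA.image _) (Set.forall_mem_image.2 h)

theorem suppF_mono (hA : A.Nonempty) (hB : IsCompact B) (hAB : A ⊆ B) (s : Euc n) :
    suppF A s ≤ suppF B s :=
  suppF_le hA fun _ hx => le_suppF hB (hAB hx) s

theorem le_suppF_sub (hA : IsCompact A) {x y : Euc n} (hx : x ∈ A) (hy : y ∈ A) (s : Euc n) :
    ⟪s, x - y⟫ ≤ suppF (A - A) s :=
  le_suppF (isCompact_sub_self hA) (Set.sub_mem_sub hx hy) s

theorem suppF_sub_le (hA : A.Nonempty) {s : Euc n} {c : ℝ}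
    (h : ∀ x ∈ A, ∀ y ∈ A, ⟪s, x - y⟫ ≤ c) : suppF (A - A) s ≤ c :=
  suppF_le (hA.sub hA) (by rintro _ ⟨x, hx, y, hy, rfl⟩; exact h x hx y hy)

theorem suppF_sub_nonneg (hA : IsCompact A) (hA' : A.Nonempty) (s : Euc n) :
    0 ≤ suppF (A - A) s := by
  obtain ⟨x, hx⟩ := hA'
  simpa using le_suppF_sub hA hx hx s

theorem exists_pos_mul_norm_le_suppF_sub (hA : IsCompact A) (hA' : (interior A).Nonempty) :
    ∃ ε > 0, ∀ s : Euc n, ε * ‖s‖ ≤ suppF (A - A) s := by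
  obtain ⟨x, hx⟩ := hA'
  obtain ⟨ε, hε, hball⟩ :=
    Metric.nhds_basis_closedBall.mem_iff.1 (mem_interior_iff_mem_nhds.1 hx)
  refine ⟨ε, hε, fun s => ?_⟩
  rcases eq_or_ne ‖s‖ 0 with hs | hs
  · simpa [hs] using suppF_sub_nonneg hA ⟨x, interior_subset hx⟩ s
  have hmem : x + (ε / ‖s‖) • s ∈ A := hball <| by
    rw [Metric.mem_closedBall, dist_eq_norm, add_sub_cancel_left, norm_smul, Real.norm_eq_abs,
      abs_of_pos (by positivity), div_mul_cancel₀ _ hs]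
  calc ε * ‖s‖ = ⟪s, (x + (ε / ‖s‖) • s) - x⟫ := by
        rw [add_sub_cancel_left, real_inner_smul_right, real_inner_self_eq_norm_sq]
        field_simp
    _ ≤ suppF (A - A) s := le_suppF_sub hA hmem (interior_subset hx) s

theorem suppF_sub_pos (hA : IsCompact A) (hA' : (interior A).Nonempty) {s : Euc n}
    (hs : s ≠ 0) : 0 < suppF (A - A) s := by
  obtain ⟨ε, hε, hle⟩ := exists_pos_mul_norm_le_suppF_sub hA hA'
  exact (mul_pos hε (norm_pos_iff.2 hs)).trans_le (hle s)

end SupportFunction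

section Breadth

variable {K C : Set (Euc n)}

theorem breadthF_nonneg (hK : IsCompact K) (hK' : K.Nonempty) (hC : IsCompact C)
    (hC' : C.Nonempty) (s : Euc n) : 0 ≤ breadthF K C s :=
  div_nonneg (mul_nonneg zero_le_two (suppF_sub_nonneg hK hK' s)) (suppF_sub_nonneg hC hC' s)

theorem bddAbove_breadthF (hK : IsCompact K) (hK' : K.Nonempty) (hC : IsCompact C)
    (hC' : (interior C).Nonempty) : BddAbove {d | ∃ s : Euc n, s ≠ 0 ∧ d = breadthF K C s} := by
  obtain ⟨ε, hε, hCs⟩ := exists_pos_mul_norm_le_suppF_sub hC hC'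
  obtain ⟨R, hR⟩ := isBounded_iff_forall_norm_le.1 (isCompact_sub_self hK).isBounded
  refine ⟨2 * R / ε, ?_⟩
  rintro _ ⟨s, hs, rfl⟩
  have hs' : 0 < ‖s‖ := norm_pos_iff.2 hs
  have hKs : suppF (K - K) s ≤ R * ‖s‖ := suppF_sub_le hK' fun x hx y hy =>
    calc ⟪s, x - y⟫ ≤ ‖s‖ * ‖x - y‖ := real_inner_le_norm s (x - y)
      _ ≤ R * ‖s‖ := by nlinarith [hR _ (Set.sub_mem_sub hx hy)]
  have hR0 : 0 ≤ R := (norm_nonneg _).trans (hR _ (Set.sub_mem_sub hK'.some_mem hK'.some_mem))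
  rw [breadthF, div_le_div_iff₀ ((mul_pos hε hs').trans_le (hCs s)) hε]
  calc 2 * suppF (K - K) s * ε ≤ 2 * (R * ‖s‖) * ε := by gcongr
    _ = 2 * R * (ε * ‖s‖) := by ring
    _ ≤ 2 * R * suppF (C - C) s := by gcongr; exact hCs s

theorem breadthF_le_diamF (hK : IsCompact K) (hK' : K.Nonempty) (hC : IsCompact C)
    (hC' : (interior C).Nonempty) {s : Euc n} (hs : s ≠ 0) : breadthF K C s ≤ diamF K C :=
  le_csSup (bddAbove_breadthF hK hK' hC hC') ⟨s, hs, rfl⟩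

theorem widthF_le_breadthF (hK : IsCompact K) (hK' : K.Nonempty) (hC : IsCompact C)
    (hC' : C.Nonempty) {s : Euc n} (hs : s ≠ 0) : widthF K C ≤ breadthF K C s :=
  csInf_le ⟨0, by rintro _ ⟨s, -, rfl⟩; exact breadthF_nonneg hK hK' hC hC' s⟩ ⟨s, hs, rfl⟩

theorem two_mul_inner_sub_le_breadthF (hK : IsCompact K) {x y : Euc n} (hx : x ∈ K) (hy : y ∈ K)
    {s : Euc n} (hpos : 0 < suppF (C - C) s) (hle : suppF (C - C) s ≤ 1) :
    2 * ⟪s, x - y⟫ ≤ breadthF K C s :=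
  calc 2 * ⟪s, x - y⟫ ≤ 2 * suppF (K - K) s := by linarith [le_suppF_sub hK hx hy s]
    _ ≤ breadthF K C s :=
      le_div_self (mul_nonneg zero_le_two (suppF_sub_nonneg hK ⟨x, hx⟩ s)) hpos hle

theorem diamF_le_two_of_sub_subset (hK : K.Nonempty) (hC : IsCompact C)
    (hC' : (interior C).Nonempty) (hKC : K - K ⊆ C - C) : diamF K C ≤ 2 := by
  refine Real.sSup_le ?_ zero_le_two
  rintro _ ⟨s, hs, rfl⟩
  rw [breadthF, div_le_iff₀ (suppF_sub_pos hC hC' hs)]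
  linarith [suppF_mono (hK.sub hK) (isCompact_sub_self hC) hKC s]

theorem completeWrt_of_forall_notMem (hC : IsCompact C) (hC' : (interior C).Nonempty)
    (hD : diamF K C ≤ 2)
    (h : ∀ x ∉ K, ∃ s, suppF (C - C) s ≤ 1 ∧ ∃ y ∈ K, 1 < ⟪s, x - y⟫) : CompleteWrt K C := by
  intro K' hK' hKK'
  obtain ⟨x, hxK', hxK⟩ := Set.exists_of_ssubset hKK'
  obtain ⟨s, hs1, y, hy, hxy⟩ := h x hxK
  have hs : s ≠ 0 := by rintro rfl; simp only [inner_zero_left] at hxy; linarith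
  calc diamF K C ≤ 2 := hD
    _ < 2 * ⟪s, x - y⟫ := by linarith
    _ ≤ breadthF K' C s :=
      two_mul_inner_sub_le_breadthF hK'.2.1 hxK' (hKK'.1 hy) (suppF_sub_pos hC hC' hs) hs1
    _ ≤ diamF K' C := breadthF_le_diamF hK'.2.1 hK'.2.2 hC hC' hs

theorem completeWrt_iff_of_sub_eq {C' : Set (Euc n)} (h : C - C = C' - C') :
    CompleteWrt K C ↔ CompleteWrt K C' := by
  simp only [CompleteWrt, diamF, breadthF, h]

theorem constWidthWrt_iff_of_sub_eq {C' : Set (Euc n)} (h : C - C = C' - C') :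
    ConstWidthWrt K C ↔ ConstWidthWrt K C' := by
  simp only [ConstWidthWrt, diamF, widthF, breadthF, h]

end Breadth

theorem exists_affineBasis_of_isSimplex {S : Set (Euc n)} (hS : IsSimplex S) :
    ∃ b : AffineBasis (Fin (n + 1)) ℝ (Euc n), S = convexHull ℝ (Set.range b) := by
  obtain ⟨p, hp, rfl⟩ := hS
  refine ⟨⟨p, hp, ?_⟩, rfl⟩
  rw [hp.affineSpan_eq_top_iff_card_eq_finrank_add_one]
  simp

noncomputable def dualVec (φ : Euc n →ₗ[ℝ] ℝ) : Euc n :=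
  (InnerProductSpace.toDual ℝ (Euc n)).symm (LinearMap.toContinuousLinearMap φ)

theorem inner_dualVec (φ : Euc n →ₗ[ℝ] ℝ) (v : Euc n) : ⟪dualVec φ, v⟫ = φ v := by
  rw [dualVec, InnerProductSpace.toDual_symm_apply, LinearMap.coe_toContinuousLinearMap']

section Simplex

variable {ι : Type*} (b : AffineBasis ι ℝ (Euc n))

theorem coord_linear_sub (i : ι) (x y : Euc n) :
    (b.coord i).linear (x - y) = b.coord i x - b.coord i y :=
  (b.coord i).linearMap_vsub x y

theorem coord_sub_add (i : ι) (x y q : Euc n) :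
    b.coord i (x - y + q) = b.coord i x - b.coord i y + b.coord i q := by
  rw [← coord_linear_sub, ← vadd_eq_add, AffineMap.map_vadd, vadd_eq_add]

theorem sum_coord_compl [Fintype ι] [DecidableEq ι] (J : Finset ι) (x : Euc n) :
    ∑ i ∈ Jᶜ, b.coord i x = 1 - ∑ i ∈ J, b.coord i x := by
  linarith [Finset.sum_add_sum_compl J (fun i => b.coord i x), b.sum_coord_apply_eq_one x]

noncomputable def coordSumDir (J : Finset ι) : Euc n :=
  dualVec (∑ i ∈ J, (b.coord i).linear)

theorem inner_coordSumDir_sub (J : Finset ι) (x y : Euc n) :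
    ⟪coordSumDir b J, x - y⟫ = ∑ i ∈ J, b.coord i x - ∑ i ∈ J, b.coord i y := by
  rw [coordSumDir, inner_dualVec, LinearMap.sum_apply, ← Finset.sum_sub_distrib]
  exact Finset.sum_congr rfl fun i _ => coord_linear_sub b i x y

theorem coord_lineMap_right {i k : ι} (h : i ≠ k) (c : ℝ) :
    b.coord i (AffineMap.lineMap (b k) (b i) c) = c := by
  simp [AffineMap.apply_lineMap, b.coord_apply_eq, b.coord_apply_ne h,
    AffineMap.lineMap_apply_ring']

theorem coord_lineMap_left {i k : ι} (h : i ≠ k) (c : ℝ) :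
    b.coord k (AffineMap.lineMap (b k) (b i) c) = 1 - c := by
  simp [AffineMap.apply_lineMap, b.coord_apply_eq, b.coord_apply_ne h.symm,
    AffineMap.lineMap_apply_ring']
  ring

theorem coord_lineMap_of_ne {i j k : ι} (hi : j ≠ i) (hk : j ≠ k) (c : ℝ) :
    b.coord j (AffineMap.lineMap (b k) (b i) c) = 0 := by
  simp [AffineMap.apply_lineMap, b.coord_apply_ne hi, b.coord_apply_ne hk]

theorem inner_dualVec_coord_sub_coord (i j : ι) (x y : Euc n) :
    ⟪dualVec ((b.coord i).linear - (b.coord j).linear), x - y⟫ =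
      (b.coord i x - b.coord j x) - (b.coord i y - b.coord j y) := by
  rw [inner_dualVec, LinearMap.sub_apply, coord_linear_sub, coord_linear_sub]
  ring

theorem isCompact_convexHull_range [Finite ι] : IsCompact (convexHull ℝ (Set.range b)) :=
  (Set.finite_range b).isCompact_convexHull ℝ

theorem interior_convexHull_range_nonempty : (interior (convexHull ℝ (Set.range b))).Nonempty :=
  interior_convexHull_nonempty_iff_affineSpan_eq_top.2 b.tot

theorem sum_coord_nonneg_of_mem_convexHull {x : Euc n} (hx : x ∈ convexHull ℝ (Set.range b))
    (J : Finset ι) : 0 ≤ ∑ i ∈ J, b.coord i x := by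
  rw [b.convexHull_eq_nonneg_coord] at hx
  exact Finset.sum_nonneg fun i _ => hx i

theorem sum_coord_le_one_of_mem_convexHull [Fintype ι] [DecidableEq ι] {x : Euc n}
    (hx : x ∈ convexHull ℝ (Set.range b)) (J : Finset ι) : ∑ i ∈ J, b.coord i x ≤ 1 := by
  linarith [sum_coord_compl b J x, sum_coord_nonneg_of_mem_convexHull b hx Jᶜ]

theorem suppF_convexHull_sub_coordSumDir_le_one [Fintype ι] [DecidableEq ι] (J : Finset ι) :
    suppF (convexHull ℝ (Set.range b) - convexHull ℝ (Set.range b)) (coordSumDir b J) ≤ 1 :=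
  suppF_sub_le ((interior_convexHull_range_nonempty b).mono interior_subset) fun x hx y hy => by
    rw [inner_coordSumDir_sub]
    linarith [sum_coord_le_one_of_mem_convexHull b hx J,
      sum_coord_nonneg_of_mem_convexHull b hy J]

/-- Write `x - y = p - q` with `q ∈ S` carrying the negative parts of the differences
`λᵢ x - λᵢ y` plus the missing mass `1 - ∑ᵢ (λᵢ x - λᵢ y)⁺` at one vertex. -/
theorem sub_mem_convexHull_sub [Fintype ι] [DecidableEq ι] {x y : Euc n}
    (h : ∀ J : Finset ι, ∑ i ∈ J, b.coord i x - ∑ i ∈ J, b.coord i y ≤ 1) :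
    x - y ∈ convexHull ℝ (Set.range b) - convexHull ℝ (Set.range b) := by
  obtain ⟨i₀⟩ := b.nonempty
  set δ : ι → ℝ := fun i => b.coord i x - b.coord i y
  set m := ∑ i, (δ i)⁺
  have hm : m ≤ 1 := by
    have h' := h {i | 0 < δ i}
    rw [← Finset.sum_sub_distrib, Finset.sum_filter] at h'
    simpa only [m, posPart_eq_ite_lt] using h'
  have hδ0 : ∑ i, δ i = 0 := by
    simp [δ, Finset.sum_sub_distrib, b.sum_coord_apply_eq_one]
  set e : ι → ℝ := fun i => if i = i₀ then 1 - m else 0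
  have he : ∀ i, 0 ≤ e i := fun i => by simp only [e]; split_ifs <;> linarith
  set c : ι → ℝ := fun i => (δ i)⁻ + e i
  have hc : ∑ i, c i = 1 := by
    have hneg : ∑ i, (δ i)⁻ = m :=
      calc ∑ i, (δ i)⁻ = ∑ i, ((δ i)⁺ - δ i) :=
            Finset.sum_congr rfl fun i _ => by linarith [posPart_sub_negPart (δ i)]
        _ = m := by rw [Finset.sum_sub_distrib, hδ0, sub_zero]
    simp [c, e, Finset.sum_add_distrib, hneg]
  set q := Finset.univ.affineCombination ℝ b c
  have hq : ∀ i, b.coord i q = c i := fun i =>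
    b.coord_apply_combination_of_mem (Finset.mem_univ i) hc
  have hc0 : ∀ i, 0 ≤ c i := fun i => add_nonneg (negPart_nonneg _) (he i)
  refine ⟨x - y + q, ?_, q, ?_, add_sub_cancel_right _ _⟩
  · rw [b.convexHull_eq_nonneg_coord]
    intro i
    rw [coord_sub_add, hq]
    linarith [posPart_sub_negPart (δ i), posPart_nonneg (δ i), he i]
  · rw [b.convexHull_eq_nonneg_coord]
    exact fun i => (hq i).symm ▸ hc0 i

end Simplex

/-- `t = 1/(n-1)` is the value for which `λ₀ = -t`, `λₖ = t` (`k ≠ 0`), the apex of the witness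
body where every constraint `λ₀ + λₖ ≥ 0` is tight, are barycentric coordinates:
`-t + n t = 1`. -/
noncomputable def apexLevel (n : ℕ) : ℝ := ((n : ℝ) - 1)⁻¹

theorem apexLevel_pos (hn : 2 ≤ n) : 0 < apexLevel n := by
  have : (2 : ℝ) ≤ n := by exact_mod_cast hn
  exact inv_pos.2 (by linarith)

theorem apexLevel_le_one (hn : 2 ≤ n) : apexLevel n ≤ 1 := by
  have : (2 : ℝ) ≤ n := by exact_mod_cast hn
  exact inv_le_one_of_one_le₀ (by linarith)

theorem sub_one_mul_apexLevel (hn : 2 ≤ n) : ((n : ℝ) - 1) * apexLevel n = 1 := by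
  have : (2 : ℝ) ≤ n := by exact_mod_cast hn
  exact mul_inv_cancel₀ (by linarith)

section WitnessBody

variable (b : AffineBasis (Fin (n + 1)) ℝ (Euc n))

def witnessBody : Set (Euc n) :=
  {x | -apexLevel n ≤ b.coord 0 x ∧ b.coord 0 x ≤ 1 - apexLevel n ∧
    ∀ k ≠ 0, 0 ≤ b.coord k x ∧ 0 ≤ b.coord 0 x + b.coord k x}

noncomputable def witnessApex : Euc n :=
  Finset.univ.affineCombination ℝ b fun i => if i = 0 then -apexLevel n else apexLevel n

variable {b}

theorem coord_witnessApex (hn : 2 ≤ n) (i : Fin (n + 1)) :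
    b.coord i (witnessApex b) = if i = 0 then -apexLevel n else apexLevel n := by
  refine b.coord_apply_combination_of_mem (Finset.mem_univ i) ?_
  simp [Fin.sum_univ_succ, Fin.succ_ne_zero]
  linarith [sub_one_mul_apexLevel hn]

theorem witnessApex_mem (hn : 2 ≤ n) : witnessApex b ∈ witnessBody b := by
  have ht := apexLevel_pos hn
  refine ⟨?_, ?_, fun k hk => ?_⟩
  · simp [coord_witnessApex hn]
  · simp [coord_witnessApex hn]
  · simp [coord_witnessApex hn, hk]; exact ht.le

theorem vertex_mem_witnessBody (hn : 2 ≤ n) {k : Fin (n + 1)} (hk : k ≠ 0) :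
    b k ∈ witnessBody b := by
  have ht := apexLevel_pos hn
  have ht1 := apexLevel_le_one hn
  refine ⟨?_, ?_, fun j hj => ?_⟩ <;> simp [b.coord_apply, hk.symm]
  · exact ht.le
  · exact ht1
  · split_ifs <;> norm_num

theorem lineMap_mem_witnessBody (hn : 2 ≤ n) {k : Fin (n + 1)} (hk : k ≠ 0) :
    AffineMap.lineMap (b k) (b 0) (1 - apexLevel n) ∈ witnessBody b := by
  have ht := apexLevel_pos hn
  have ht1 := apexLevel_le_one hn
  refine ⟨?_, ?_, fun j hj => ?_⟩
  · rw [coord_lineMap_right b hk.symm]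
    linarith
  · rw [coord_lineMap_right b hk.symm]
  · rw [coord_lineMap_right b hk.symm]
    by_cases hjk : j = k
    · subst hjk
      rw [coord_lineMap_left b hk.symm]
      constructor <;> linarith
    · rw [coord_lineMap_of_ne b hj hjk]
      constructor <;> linarith

theorem sum_coord_nonneg_of_mem_witnessBody {x : Euc n} (hx : x ∈ witnessBody b)
    {J : Finset (Fin (n + 1))} (hJ : 0 ∉ J) : 0 ≤ ∑ i ∈ J, b.coord i x :=
  Finset.sum_nonneg fun i hi => (hx.2.2 i (ne_of_mem_of_not_mem hi hJ)).1

theorem sum_coord_le_one_of_mem_witnessBody {x : Euc n} (hx : x ∈ witnessBody b)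
    {J : Finset (Fin (n + 1))} (hJ : 0 ∈ J) : ∑ i ∈ J, b.coord i x ≤ 1 := by
  linarith [sum_coord_compl b J x,
    sum_coord_nonneg_of_mem_witnessBody hx (J := Jᶜ) (Finset.notMem_compl.2 hJ)]

theorem sum_coord_sub_sum_coord_le_one {x y : Euc n} (hx : x ∈ witnessBody b)
    (hy : y ∈ witnessBody b) (J : Finset (Fin (n + 1))) :
    ∑ i ∈ J, b.coord i x - ∑ i ∈ J, b.coord i y ≤ 1 := by
  wlog hJ : 0 ∉ J generalizing x y J
  · have h := this hy hx Jᶜ (Finset.notMem_compl.2 (not_not.1 hJ))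
    linarith [sum_coord_compl b J x, sum_coord_compl b J y]
  by_cases hk : ∃ k ∈ Jᶜ, k ≠ 0
  · obtain ⟨k, hkJ, hk0⟩ := hk
    have hxJc : b.coord 0 x + b.coord k x ≤ ∑ i ∈ Jᶜ, b.coord i x := by
      rw [← Finset.sum_pair (f := fun i => b.coord i x) hk0.symm]
      refine Finset.sum_le_sum_of_subset_of_nonneg ?_ fun i _ hi => (hx.2.2 i ?_).1
      · simp [Finset.insert_subset_iff, hJ, Finset.mem_compl.1 hkJ]
      · rintro rfl
        simp at hi
    linarith [sum_coord_compl b J x, (hx.2.2 k hk0).2, sum_coord_nonneg_of_mem_witnessBody hy hJ]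
  · simp only [not_exists, not_and, not_not] at hk
    have hJc : ∀ z : Euc n, ∑ i ∈ Jᶜ, b.coord i z = b.coord 0 z := fun z =>
      Finset.sum_eq_single_of_mem 0 (Finset.mem_compl.2 hJ) fun k hkJ hk0 => absurd (hk k hkJ) hk0
    linarith [sum_coord_compl b J x, sum_coord_compl b J y, hJc x, hJc y, hx.1, hy.2.1]

theorem witnessBody_sub_subset :
    witnessBody b - witnessBody b ⊆ convexHull ℝ (Set.range b) - convexHull ℝ (Set.range b) := by
  rintro _ ⟨x, hx, y, hy, rfl⟩
  exact sub_mem_convexHull_sub b (sum_coord_sub_sum_coord_le_one hx hy)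

theorem convex_witnessBody : Convex ℝ (witnessBody b) := by
  rintro x ⟨hx0, hx1, hx⟩ y ⟨hy0, hy1, hy⟩ p q hp hq hpq
  simp only [witnessBody, Set.mem_ofPred_eq, Convex.combo_affine_apply hpq, smul_eq_mul]
  have ht : p * apexLevel n + q * apexLevel n = apexLevel n := by rw [← add_mul, hpq, one_mul]
  refine ⟨by linarith [mul_le_mul_of_nonneg_left hx0 hp, mul_le_mul_of_nonneg_left hy0 hq],
    by linarith [mul_le_mul_of_nonneg_left hx1 hp, mul_le_mul_of_nonneg_left hy1 hq],
    fun k hk => ?_⟩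
  obtain ⟨hxk, hx0k⟩ := hx k hk
  obtain ⟨hyk, hy0k⟩ := hy k hk
  constructor <;> nlinarith [mul_nonneg hp hxk, mul_nonneg hq hyk, mul_nonneg hp hx0k,
    mul_nonneg hq hy0k]

theorem isClosed_witnessBody : IsClosed (witnessBody b) := by
  have hc : ∀ i, Continuous (b.coord i) := fun i => (b.coord i).continuous_of_finiteDimensional
  simp only [witnessBody, Set.ofPred_and, Set.ofPred_forall]
  exact (isClosed_le continuous_const (hc 0)).inter ((isClosed_le (hc 0) continuous_const).inter
    (isClosed_iInter fun k => isClosed_iInter fun _ =>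
      (isClosed_le continuous_const (hc k)).inter
        (isClosed_le continuous_const ((hc 0).add (hc k)))))

theorem isBody_witnessBody (hn : 2 ≤ n) : IsBody (witnessBody b) := by
  have ha := witnessApex_mem (b := b) hn
  obtain ⟨R, hR⟩ := isBounded_iff_forall_norm_le.1
    (isCompact_sub_self (isCompact_convexHull_range b)).isBounded
  refine ⟨convex_witnessBody, Metric.isCompact_of_isClosed_isBounded isClosed_witnessBody
    (isBounded_iff_forall_norm_le.2 ⟨R + ‖witnessApex b‖, fun x hx => ?_⟩), _, ha⟩
  linarith [hR _ (witnessBody_sub_subset (Set.sub_mem_sub hx ha)),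
    norm_sub_norm_le x (witnessApex b)]

theorem diamF_witnessBody (hn : 2 ≤ n) :
    diamF (witnessBody b) (convexHull ℝ (Set.range b)) = 2 := by
  have hK := isBody_witnessBody (b := b) hn
  have hk : (⟨1, by omega⟩ : Fin (n + 1)) ≠ 0 := by simp [Fin.ext_iff]
  refine le_antisymm (diamF_le_two_of_sub_subset hK.2.2 (isCompact_convexHull_range b)
    (interior_convexHull_range_nonempty b) witnessBody_sub_subset) ?_
  have hxy : ⟪coordSumDir b {0},
      AffineMap.lineMap (b ⟨1, by omega⟩) (b 0) (1 - apexLevel n) - witnessApex b⟫ = 1 := by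
    rw [inner_coordSumDir_sub, Finset.sum_singleton, Finset.sum_singleton,
      coord_lineMap_right b hk.symm, coord_witnessApex hn, if_pos rfl]
    ring
  have hs : coordSumDir b {0} ≠ 0 := by
    rintro h
    rw [h, inner_zero_left] at hxy
    exact zero_ne_one hxy
  calc (2 : ℝ) = 2 * ⟪coordSumDir b {0}, _⟫ := by rw [hxy, mul_one]
    _ ≤ breadthF (witnessBody b) (convexHull ℝ (Set.range b)) (coordSumDir b {0}) :=
      two_mul_inner_sub_le_breadthF hK.2.1 (lineMap_mem_witnessBody hn hk) (witnessApex_mem hn)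
        (suppF_sub_pos (isCompact_convexHull_range b) (interior_convexHull_range_nonempty b) hs)
        (suppF_convexHull_sub_coordSumDir_le_one b {0})
    _ ≤ _ := breadthF_le_diamF hK.2.1 hK.2.2 (isCompact_convexHull_range b)
        (interior_convexHull_range_nonempty b) hs

theorem exists_sum_coord_sub_gt_one_of_notMem (hn : 2 ≤ n) {x : Euc n}
    (hx : x ∉ witnessBody b) :
    ∃ J : Finset (Fin (n + 1)), ∃ y ∈ witnessBody b,
      1 < ∑ i ∈ J, b.coord i x - ∑ i ∈ J, b.coord i y := by
  have hcompl : ∀ (T : Finset (Fin (n + 1))) (y : Euc n),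
      ∑ i ∈ Tᶜ, b.coord i x - ∑ i ∈ Tᶜ, b.coord i y =
        ∑ i ∈ T, b.coord i y - ∑ i ∈ T, b.coord i x := fun T y => by
    rw [sum_coord_compl, sum_coord_compl]; ring
  have hk1 : (⟨1, by omega⟩ : Fin (n + 1)) ≠ 0 := by simp [Fin.ext_iff]
  simp only [witnessBody, Set.mem_ofPred_eq, not_and_or, not_le, not_forall] at hx
  rcases hx with h | h | ⟨k, hk, h | h⟩
  · refine ⟨{0}ᶜ, _, lineMap_mem_witnessBody hn hk1, ?_⟩
    rw [hcompl, Finset.sum_singleton, Finset.sum_singleton, coord_lineMap_right b hk1.symm]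
    linarith
  · refine ⟨{0}, _, witnessApex_mem hn, ?_⟩
    simp [coord_witnessApex hn]
    linarith
  · refine ⟨{k}ᶜ, _, vertex_mem_witnessBody hn hk, ?_⟩
    rw [hcompl]
    simp
    linarith
  · refine ⟨{0, k}ᶜ, _, lineMap_mem_witnessBody hn hk, ?_⟩
    rw [hcompl, Finset.sum_pair hk.symm, Finset.sum_pair hk.symm]
    rw [coord_lineMap_right b hk.symm, coord_lineMap_left b hk.symm]
    linarith

theorem completeWrt_witnessBody (hn : 2 ≤ n) :
    CompleteWrt (witnessBody b) (convexHull ℝ (Set.range b)) := by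
  refine completeWrt_of_forall_notMem (isCompact_convexHull_range b)
    (interior_convexHull_range_nonempty b) (diamF_witnessBody hn).le fun x hx => ?_
  obtain ⟨J, y, hy, hxy⟩ := exists_sum_coord_sub_gt_one_of_notMem hn hx
  exact ⟨coordSumDir b J, suppF_convexHull_sub_coordSumDir_le_one b J, y, hy,
    (inner_coordSumDir_sub b J x y).symm ▸ hxy⟩

theorem neg_one_le_coord_zero_sub_coord {x : Euc n} (hx : x ∈ witnessBody b)
    {k j l : Fin (n + 1)} (hkjl : [0, k, j, l].Nodup) : -1 ≤ b.coord 0 x - b.coord k x := by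
  have h := sum_coord_le_one_of_mem_witnessBody hx (J := [0, k, j, l].toFinset) (by simp)
  rw [List.sum_toFinset _ hkjl] at h
  simp only [List.nodup_cons, List.mem_cons, List.not_mem_nil, or_false, not_or] at hkjl
  obtain ⟨⟨-, hj, hl⟩, -⟩ := hkjl
  simp only [List.map_cons, List.map_nil, List.sum_cons, List.sum_nil] at h
  linarith [(hx.2.2 j (Ne.symm hj)).2, (hx.2.2 l (Ne.symm hl)).2]

theorem widthF_witnessBody_lt_two (hn : 3 ≤ n) :
    widthF (witnessBody b) (convexHull ℝ (Set.range b)) < 2 := by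
  have hK := isBody_witnessBody (b := b) (by omega)
  set k : Fin (n + 1) := ⟨1, by omega⟩
  have hnodup : [0, k, ⟨2, by omega⟩, ⟨3, by omega⟩].Nodup := by simp [k, Fin.ext_iff]
  have hk : k ≠ 0 := by simp [k, Fin.ext_iff]
  set s := dualVec ((b.coord 0).linear - (b.coord k).linear)
  have hvert : ⟪s, b 0 - b k⟫ = 2 := by
    rw [inner_dualVec_coord_sub_coord, b.coord_apply_eq, b.coord_apply_eq, b.coord_apply_ne hk.symm,
      b.coord_apply_ne hk]
    norm_num
  have hs0 : s ≠ 0 := by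
    rintro h
    rw [h, inner_zero_left] at hvert
    norm_num at hvert
  have hS : 2 ≤ suppF (convexHull ℝ (Set.range b) - convexHull ℝ (Set.range b)) s :=
    hvert ▸ le_suppF_sub (isCompact_convexHull_range b)
      (subset_convexHull ℝ _ (Set.mem_range_self 0))
      (subset_convexHull ℝ _ (Set.mem_range_self k)) s
  have hKs : suppF (witnessBody b - witnessBody b) s ≤ 2 - apexLevel n :=
    suppF_sub_le hK.2.2 fun x hx y hy => by
      rw [inner_dualVec_coord_sub_coord]
      linarith [hx.2.1, (hx.2.2 k hk).1, neg_one_le_coord_zero_sub_coord hy hnodup]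
  calc widthF (witnessBody b) (convexHull ℝ (Set.range b))
      ≤ breadthF (witnessBody b) (convexHull ℝ (Set.range b)) s :=
        widthF_le_breadthF hK.2.1 hK.2.2 (isCompact_convexHull_range b)
          ((interior_convexHull_range_nonempty b).mono interior_subset) hs0
    _ ≤ 2 * (2 - apexLevel n) / 2 := by
        rw [breadthF]
        gcongr
        linarith [apexLevel_pos (n := n) (by omega), apexLevel_le_one (n := n) (by omega)]
    _ < 2 := by linarith [apexLevel_pos (n := n) (by omega)]

end WitnessBody

end SimplexNotPerfect

open SimplexNotPerfect

theorem simplex_difference_body_not_perfect_general {n : ℕ} (hn : 3 ≤ n)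
    (S C : Set (Euc n)) (hS : IsSimplex S) (hCC : C - C = S - S) :
    ∃ K : Set (Euc n), IsBody K ∧ CompleteWrt K C ∧ ¬ ConstWidthWrt K C := by
  obtain ⟨b, rfl⟩ := exists_affineBasis_of_isSimplex hS
  refine ⟨witnessBody b, isBody_witnessBody (by omega),
    (completeWrt_iff_of_sub_eq hCC).2 (completeWrt_witnessBody (by omega)), ?_⟩
  rw [constWidthWrt_iff_of_sub_eq hCC, ConstWidthWrt, diamF_witnessBody (by omega)]
  exact (widthF_witnessBody_lt_two hn).ne

/-- if `C - C = S - S` for an n-simplex `S`, `n ≥ 3`, then `C` is not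
perfect: some body is complete but not of constant width with respect to `C`. -/
theorem simplex_difference_body_not_perfect {n : ℕ} (hn : 3 ≤ n)
    (S C : Set (Euc n)) (hS : IsSimplex S) (hC : IsBody C)
    (hCint : (interior C).Nonempty) (hCC : C - C = S - S) :
    ∃ K : Set (Euc n), IsBody K ∧ CompleteWrt K C ∧ ¬ ConstWidthWrt K C :=
  simplex_difference_body_not_perfect_general hn S C hS hCC
end

section
/- Let C ⊆ ℝⁿ be a 0-symmetric polytope with nonempty interior and let K ⊆ ℝⁿ be a convex body that is complete and reduced with respect to C (so K is a polytope). If some extreme point v of w(K,C)•C lies in a facet F of K − K such that an outer normal of F is also an outer normal of a facet of K, then K is of constant width with respect to C. -/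
open Pointwise

/-!
Let `w` and `D` be the width and the diameter of `K`. Since `v ∈ w • C` lies on the face of
`K - K` with normal `a`, the breadth of `K` in direction `a` is `w`. Completeness forces it to be
`D` as well: at a relative interior point `x` of the facet of `K` with normal `a` some direction
`s` must be diametral, `2 (⟪s, x⟫ + h(K, -s)) = D h(C - C, s)`, for otherwise `x` could be pushed
slightly out of `K` along `a` without increasing the diameter. Such an `s` is maximised over the
facet at `x`, hence is normal to the facet, hence a multiple of `a`; the multiple is positive,
because `w > 0` by reducedness keeps `K` off the facet's hyperplane.
-/

section SupportFunction

variable {n : ℕ} {A B : Set (Euc n)}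

lemma IsCompact.bddAbove_image_inner (hA : IsCompact A) (s : Euc n) :
    BddAbove ((fun x => (inner ℝ s x : ℝ)) '' A) :=
  hA.bddAbove_image (by fun_prop)

lemma inner_le_suppF (hA : IsCompact A) {x : Euc n} (hx : x ∈ A) (s : Euc n) :
    inner ℝ s x ≤ suppF A s :=
  le_csSup (hA.bddAbove_image_inner s) ⟨x, hx, rfl⟩

lemma suppF_le {s : Euc n} {M : ℝ} (hA : A.Nonempty) (h : ∀ x ∈ A, inner ℝ s x ≤ M) :
    suppF A s ≤ M :=
  csSup_le (hA.image _) (Set.forall_mem_image.2 h)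

lemma faceOf_nonempty (hA : IsCompact A) (hne : A.Nonempty) (a : Euc n) :
    (faceOf A a).Nonempty := by
  obtain ⟨x, hx, hxa⟩ :=
    (hA.image (f := fun x => (inner ℝ a x : ℝ)) (by fun_prop)).sSup_mem (hne.image _)
  exact ⟨x, hx, hxa⟩

lemma suppF_singleton (x s : Euc n) : suppF {x} s = inner ℝ s x := by
  simp [suppF]

lemma suppF_neg (A : Set (Euc n)) (s : Euc n) : suppF (-A) s = suppF A (-s) := by
  simp only [suppF, ← Set.image_neg_eq_neg, Set.image_image, inner_neg_right, inner_neg_left]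

lemma suppF_smul (A : Set (Euc n)) {c : ℝ} (hc : 0 ≤ c) (s : Euc n) :
    suppF A (c • s) = c * suppF A s := by
  simp only [suppF, real_inner_smul_left, ← smul_eq_mul, ← Real.sSup_smul_of_nonneg hc,
    ← Set.image_smul, Set.image_image]

lemma suppF_add (hA : IsCompact A) (hA' : A.Nonempty) (hB : IsCompact B) (hB' : B.Nonempty)
    (s : Euc n) : suppF (A + B) s = suppF A s + suppF B s := by
  have himage : (fun x => (inner ℝ s x : ℝ)) '' (A + B) = (fun x => (inner ℝ s x : ℝ)) '' A +
      (fun x => (inner ℝ s x : ℝ)) '' B :=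
    Set.image_add (innerₛₗ ℝ s)
  rw [suppF, himage, csSup_add (hA'.image _) (hA.bddAbove_image_inner s) (hB'.image _)
    (hB.bddAbove_image_inner s)]
  rfl

lemma suppF_sub (hA : IsCompact A) (hA' : A.Nonempty) (hB : IsCompact B) (hB' : B.Nonempty)
    (s : Euc n) : suppF (A - B) s = suppF A s + suppF B (-s) := by
  rw [sub_eq_add_neg, suppF_add hA hA' hB.neg hB'.neg, suppF_neg]

lemma IsCompact.sub_self (hA : IsCompact A) : IsCompact (A - A) := by
  rw [sub_eq_add_neg]
  exact hA.add hA.neg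

lemma suppF_sub_self_neg (A : Set (Euc n)) (s : Euc n) : suppF (A - A) (-s) = suppF (A - A) s := by
  rw [← suppF_neg, neg_sub]

lemma suppF_sub_self_nonneg (hA : IsCompact A) {x : Euc n} (hx : x ∈ A) (s : Euc n) :
    0 ≤ suppF (A - A) s := by
  simpa using inner_le_suppF hA.sub_self (Set.sub_mem_sub hx hx) s

lemma continuous_suppF (hA : IsCompact A) : Continuous (suppF A) :=
  hA.continuous_sSup (f := fun s x => (inner ℝ s x : ℝ)) continuous_inner

lemma suppF_convexHull_insert_le (hA : IsCompact A) (y s : Euc n) :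
    suppF (convexHull ℝ (insert y A)) s ≤ max (inner ℝ s y) (suppF A s) := by
  refine suppF_le ((Set.insert_nonempty y A).mono (subset_convexHull ℝ _)) fun z hz => ?_
  refine convexHull_min (t := {z | inner ℝ s z ≤ max (inner ℝ s y) (suppF A s)})
    (Set.insert_subset (show inner ℝ s y ≤ _ from le_max_left _ _) fun x hx => ?_)
    (convex_halfSpace_le (innerₛₗ ℝ s).isLinear _) hz
  exact (inner_le_suppF hA hx s).trans (le_max_right _ _)

end SupportFunction

lemma IsCompact.convexHull_insert {E : Type*} [AddCommGroup E] [Module ℝ E] [TopologicalSpace E]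
    [IsTopologicalAddGroup E] [ContinuousSMul ℝ E] {K : Set E} (hK : IsCompact K)
    (hKconv : Convex ℝ K) (hne : K.Nonempty) (y : E) :
    IsCompact (convexHull ℝ (insert y K)) := by
  have hjoin : convexJoin ℝ {y} K =
      (fun p : ℝ × E => AffineMap.lineMap y p.2 p.1) '' (Set.Icc 0 1 ×ˢ K) := by
    ext z
    simp only [convexJoin_singleton_left, segment_eq_image_lineMap, Set.mem_iUnion, Set.mem_image,
      Set.mem_prod, Prod.exists, exists_prop]
    grind
  rw [_root_.convexHull_insert hne, hKconv.convexHull_eq, hjoin]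
  exact (isCompact_Icc.prod hK).image (by fun_prop)

lemma exists_pos_mul_norm_le_of_homogeneous {E : Type*} [NormedAddCommGroup E] [NormedSpace ℝ E]
    [ProperSpace E] [Nontrivial E] {ψ : E → ℝ} (hcont : Continuous ψ)
    (hsmul : ∀ c : ℝ, 0 < c → ∀ s, ψ (c • s) = c * ψ s) (hpos : ∀ s ≠ 0, 0 < ψ s) :
    ∃ m > 0, ∀ s, s ≠ 0 → m * ‖s‖ ≤ ψ s := by
  obtain ⟨u, hu, hmin⟩ := (isCompact_sphere (0 : E) 1).exists_isMinOn
    (NormedSpace.sphere_nonempty.2 zero_le_one) hcont.continuousOn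
  refine ⟨ψ u, hpos u (ne_zero_of_mem_unit_sphere ⟨u, hu⟩), fun s hs => ?_⟩
  have hs' : 0 < ‖s‖ := norm_pos_iff.2 hs
  have hunit : ‖s‖⁻¹ • s ∈ Metric.sphere (0 : E) 1 := by
    simp [norm_smul, hs'.ne']
  calc ψ u * ‖s‖ ≤ ψ (‖s‖⁻¹ • s) * ‖s‖ := by gcongr; exact hmin hunit
    _ = ψ s := by
      rw [hsmul _ (inv_pos.2 hs'), mul_comm, ← mul_assoc, mul_inv_cancel₀ hs'.ne', one_mul]

section Breadth

variable {n : ℕ} {K C : Set (Euc n)}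

open Filter Topology in
lemma suppF_sub_self_pos (hC : IsCompact C) (hCint : (interior C).Nonempty) {s : Euc n}
    (hs : s ≠ 0) : 0 < suppF (C - C) s := by
  obtain ⟨c, hc⟩ := hCint
  have hnear : ∀ᶠ t : ℝ in 𝓝 0, c + t • s ∈ C :=
    (Continuous.tendsto' (by fun_prop) 0 c (by simp)).eventually (mem_interior_iff_mem_nhds.1 hc)
  have hright : ∀ᶠ t : ℝ in 𝓝[>] 0, c + t • s ∈ C := nhdsWithin_le_nhds hnear
  obtain ⟨t, htC, ht⟩ := (hright.and self_mem_nhdsWithin).exists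
  calc 0 < t * ‖s‖ ^ 2 := mul_pos ht (pow_pos (norm_pos_iff.2 hs) 2)
    _ = inner ℝ s (c + t • s - c) := by
      rw [add_sub_cancel_left, real_inner_smul_right, real_inner_self_eq_norm_sq]
    _ ≤ suppF (C - C) s := inner_le_suppF hC.sub_self (Set.sub_mem_sub htC (interior_subset hc)) s

lemma suppF_sub_self_eq_two_mul (hC : IsCompact C) (hCne : C.Nonempty) (hsym : C = -C)
    (s : Euc n) : suppF (C - C) s = 2 * suppF C s := by
  rw [suppF_sub hC hCne hC hCne, ← suppF_neg, ← hsym, two_mul]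

lemma bddAbove_breadths (hK : IsCompact K) (hC : IsCompact C) (hCint : (interior C).Nonempty) :
    BddAbove {d : ℝ | ∃ s : Euc n, s ≠ 0 ∧ d = breadthF K C s} := by
  have hcont : ContinuousOn (breadthF K C) (Metric.sphere 0 1) :=
    ((continuous_suppF hK.sub_self).const_mul 2).continuousOn.div
      (continuous_suppF hC.sub_self).continuousOn
      fun s hs => (suppF_sub_self_pos hC hCint (ne_zero_of_mem_unit_sphere ⟨s, hs⟩)).ne'
  refine ((isCompact_sphere 0 1).bddAbove_image hcont).mono ?_
  rintro _ ⟨s, hs, rfl⟩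
  have hs' : 0 < ‖s‖⁻¹ := inv_pos.2 (norm_pos_iff.2 hs)
  refine ⟨‖s‖⁻¹ • s, by simp [norm_smul, hs], ?_⟩
  simp only [breadthF, suppF_smul _ hs'.le]
  rw [mul_left_comm, mul_div_mul_left _ _ hs'.ne']

lemma bddBelow_breadths (hK : IsCompact K) (hKne : K.Nonempty) (hC : IsCompact C)
    (hCne : C.Nonempty) : BddBelow {d : ℝ | ∃ s : Euc n, s ≠ 0 ∧ d = breadthF K C s} := by
  obtain ⟨x, hx⟩ := hKne
  obtain ⟨c, hc⟩ := hCne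
  refine ⟨0, ?_⟩
  rintro _ ⟨s, -, rfl⟩
  exact div_nonneg (mul_nonneg zero_le_two (suppF_sub_self_nonneg hK hx s))
    (suppF_sub_self_nonneg hC hc s)

lemma two_mul_suppF_le_diamF_mul (hK : IsCompact K) (hC : IsCompact C)
    (hCint : (interior C).Nonempty) {s : Euc n} (hs : s ≠ 0) :
    2 * suppF (K - K) s ≤ diamF K C * suppF (C - C) s := by
  have := le_csSup (bddAbove_breadths hK hC hCint) ⟨s, hs, rfl⟩
  rwa [breadthF, div_le_iff₀ (suppF_sub_self_pos hC hCint hs)] at this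

lemma widthF_mul_le_two_mul_suppF (hK : IsCompact K) (hKne : K.Nonempty) (hC : IsCompact C)
    (hCint : (interior C).Nonempty) {s : Euc n} (hs : s ≠ 0) :
    widthF K C * suppF (C - C) s ≤ 2 * suppF (K - K) s := by
  have := csInf_le (bddBelow_breadths hK hKne hC (hCint.mono interior_subset)) ⟨s, hs, rfl⟩
  rwa [breadthF, le_div_iff₀ (suppF_sub_self_pos hC hCint hs)] at this

lemma diamF_le_of_forall [Nontrivial (Euc n)] (hC : IsCompact C) (hCint : (interior C).Nonempty)
    {d : ℝ} (h : ∀ s ≠ 0, 2 * suppF (K - K) s ≤ d * suppF (C - C) s) : diamF K C ≤ d := by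
  obtain ⟨s, hs⟩ := exists_ne (0 : Euc n)
  refine csSup_le ⟨_, s, hs, rfl⟩ ?_
  rintro _ ⟨s, hs, rfl⟩
  exact (div_le_iff₀ (suppF_sub_self_pos hC hCint hs)).2 (h s hs)

lemma two_mul_suppF_le_of_mem_faceOf (hC : IsCompact C) (hsym : C = -C) {r : ℝ} (hr : 0 ≤ r)
    {a v : Euc n} (hvC : v ∈ r • C) (hvF : v ∈ faceOf (K - K) a) :
    2 * suppF (K - K) a ≤ r * suppF (C - C) a := by
  obtain ⟨c, hc, rfl⟩ := hvC
  rw [suppF_sub_self_eq_two_mul hC ⟨c, hc⟩ hsym, ← hvF.2, real_inner_smul_right]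
  nlinarith [inner_le_suppF hC hc a]

lemma breadths_singleton [Nontrivial (Euc n)] (x : Euc n) (C : Set (Euc n)) :
    {d : ℝ | ∃ s : Euc n, s ≠ 0 ∧ d = breadthF {x} C s} = {0} := by
  obtain ⟨s₀, hs₀⟩ := exists_ne (0 : Euc n)
  have hzero : ∀ s, breadthF {x} C s = 0 := by
    simp [breadthF, suppF_singleton]
  ext d
  constructor
  · rintro ⟨s, -, rfl⟩
    exact hzero s
  · rintro rfl
    exact ⟨s₀, hs₀, (hzero s₀).symm⟩

lemma widthF_singleton [Nontrivial (Euc n)] (x : Euc n) (C : Set (Euc n)) :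
    widthF {x} C = 0 := by
  rw [widthF, breadths_singleton, csInf_singleton]

lemma constWidthWrt_singleton [Nontrivial (Euc n)] (x : Euc n) (C : Set (Euc n)) :
    ConstWidthWrt {x} C := by
  rw [ConstWidthWrt, widthF_singleton, diamF, breadths_singleton, csSup_singleton]

end Breadth

section Completeness

variable {n : ℕ} {K C : Set (Euc n)} [Nontrivial (Euc n)]

theorem CompleteWrt.mem_of_forall_inner_add_suppF_neg_le (hcomp : CompleteWrt K C) (hK : IsBody K)
    (hC : IsCompact C) (hCint : (interior C).Nonempty) {y : Euc n}
    (hy : ∀ s ≠ 0, 2 * (inner ℝ s y + suppF K (-s)) ≤ diamF K C * suppF (C - C) s) : y ∈ K := by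
  obtain ⟨hKconv, hKcpt, hKne⟩ := hK
  by_contra hyK
  set K' := convexHull ℝ (insert y K)
  have hK'cpt : IsCompact K' := hKcpt.convexHull_insert hKconv hKne y
  have hK'ne : K'.Nonempty := (Set.insert_nonempty y K).mono (subset_convexHull ℝ _)
  have hKK' : K ⊂ K' := Set.ssubset_iff_subset_ne.2
    ⟨(Set.subset_insert y K).trans (subset_convexHull ℝ _),
      fun h => hyK (h ▸ subset_convexHull ℝ _ (Set.mem_insert y K))⟩
  refine (hcomp K' ⟨convex_convexHull ℝ _, hK'cpt, hK'ne⟩ hKK').not_ge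
    (diamF_le_of_forall hC hCint fun s hs => ?_)
  have hKs := two_mul_suppF_le_diamF_mul hKcpt hC hCint hs
  have hKs0 := suppF_sub_self_nonneg hKcpt hKne.some_mem s
  have hys := hy s hs
  have hyns := hy (-s) (neg_ne_zero.2 hs)
  rw [neg_neg, suppF_sub_self_neg, inner_neg_left] at hyns
  rw [suppF_sub hKcpt hKne hKcpt hKne] at hKs hKs0
  have hK's := suppF_convexHull_insert_le hKcpt y s
  have hK'ns := suppF_convexHull_insert_le hKcpt y (-s)
  rw [inner_neg_left] at hK'ns
  rw [suppF_sub hK'cpt hK'ne hK'cpt hK'ne]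
  rcases max_cases (inner ℝ s y) (suppF K s) with ⟨h₁, -⟩ | ⟨h₁, -⟩ <;>
    rcases max_cases (-inner ℝ s y) (suppF K (-s)) with ⟨h₂, -⟩ | ⟨h₂, -⟩ <;>
    linarith

theorem CompleteWrt.exists_diametral_direction (hcomp : CompleteWrt K C) (hK : IsBody K)
    (hC : IsCompact C) (hCint : (interior C).Nonempty) {a x : Euc n} (ha : a ≠ 0)
    (hx : x ∈ faceOf K a) :
    ∃ s ≠ 0, 2 * (inner ℝ s x + suppF K (-s)) = diamF K C * suppF (C - C) s := by
  have hKcpt := hK.2.1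
  have hKne := hK.2.2
  by_contra! hloose
  set ψ : Euc n → ℝ := fun s => diamF K C * suppF (C - C) s - 2 * (inner ℝ s x + suppF K (-s))
  have hψpos : ∀ s ≠ 0, 0 < ψ s := fun s hs => by
    have hle := two_mul_suppF_le_diamF_mul hKcpt hC hCint hs
    rw [suppF_sub hKcpt hKne hKcpt hKne] at hle
    have := inner_le_suppF hKcpt hx.1 s
    exact sub_pos.2 (lt_of_le_of_ne (by linarith) (hloose s hs))
  have hψsmul : ∀ c : ℝ, 0 < c → ∀ s, ψ (c • s) = c * ψ s := fun c hc s => by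
    simp only [ψ, ← smul_neg, suppF_smul _ hc.le, real_inner_smul_left]
    ring
  have hψcont : Continuous ψ :=
    (continuous_const.mul (continuous_suppF hC.sub_self)).sub <| continuous_const.mul <|
      (continuous_id.inner continuous_const).add ((continuous_suppF hKcpt).comp continuous_neg)
  obtain ⟨m, hm, hψm⟩ := exists_pos_mul_norm_le_of_homogeneous hψcont hψsmul hψpos
  have ha' : 0 < ‖a‖ := norm_pos_iff.2 ha
  have hyK : x + (m / (2 * ‖a‖)) • a ∈ K := hcomp.mem_of_forall_inner_add_suppF_neg_le hK hC hCint
    fun s hs => by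
      have hsa : inner ℝ s ((m / (2 * ‖a‖)) • a) ≤ m / 2 * ‖s‖ := by
        rw [real_inner_smul_right]
        calc m / (2 * ‖a‖) * inner ℝ s a ≤ m / (2 * ‖a‖) * (‖s‖ * ‖a‖) := by
              gcongr; exact real_inner_le_norm s a
          _ = m / 2 * ‖s‖ := by field_simp
      have := hψm s hs
      simp only [ψ] at this
      rw [inner_add_right]
      linarith
  have hpush := inner_le_suppF hKcpt hyK a
  rw [inner_add_right, hx.2, real_inner_smul_right, real_inner_self_eq_norm_sq] at hpush
  have : 0 < m / (2 * ‖a‖) * ‖a‖ ^ 2 := by positivity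
  linarith

end Completeness

section Facets

variable {n : ℕ}

lemma Convex.faceOf {K : Set (Euc n)} (hK : Convex ℝ K) (a : Euc n) : Convex ℝ (faceOf K a) :=
  hK.inter (convex_hyperplane (innerₛₗ ℝ a).isLinear _)

lemma mem_orthogonal_vectorSpan_of_inner_eq {A : Set (Euc n)} {s : Euc n} {r : ℝ}
    (h : ∀ x ∈ A, inner ℝ s x = r) : s ∈ (vectorSpan ℝ A)ᗮ := by
  have hker : vectorSpan ℝ A ≤ LinearMap.ker (innerₛₗ ℝ s) := by
    rw [vectorSpan_def, Submodule.span_le]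
    rintro _ ⟨x, hx, y, hy, rfl⟩
    simp [inner_sub_right, h x hx, h y hy]
  exact (Submodule.mem_orthogonal' _ _).2 fun u hu => hker hu

/-- A linear functional maximal on `F` at the centroid of a finite affine spanning set `t ⊆ F`
is constant on `t`. -/
lemma Convex.exists_forall_isMaxOn_inner_mem_orthogonal {F : Set (Euc n)} (hF : Convex ℝ F)
    (hne : F.Nonempty) :
    ∃ x ∈ F, ∀ s : Euc n, IsMaxOn (fun y => inner ℝ s y) F x → s ∈ (vectorSpan ℝ F)ᗮ := by
  obtain ⟨t, htF, hspan, hind⟩ := exists_affineIndependent ℝ (Euc n) F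
  lift t to Finset (Euc n) using finite_set_of_fin_dim_affineIndependent ℝ hind
  have htne : t.Nonempty := by
    rw [Finset.nonempty_iff_ne_empty]
    rintro rfl
    rw [Finset.coe_empty, AffineSubspace.span_empty, eq_comm, affineSpan_eq_bot] at hspan
    exact hne.ne_empty hspan
  have hcard : (t.card : ℝ) ≠ 0 := by simp [htne.ne_empty]
  refine ⟨∑ y ∈ t, (t.card : ℝ)⁻¹ • y, hF.sum_mem (fun _ _ => by positivity)
    (by simp [hcard]) fun y hy => htF hy, fun s hmax => ?_⟩
  have hsum : ∑ y ∈ t, inner ℝ s y = ∑ _y ∈ t, inner ℝ s (∑ y ∈ t, (t.card : ℝ)⁻¹ • y) := by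
    simp only [Finset.sum_const, nsmul_eq_mul, inner_sum, real_inner_smul_right, ← Finset.mul_sum,
      mul_inv_cancel_left₀ hcard]
  rw [← direction_affineSpan, ← hspan, direction_affineSpan]
  exact mem_orthogonal_vectorSpan_of_inner_eq
    ((Finset.sum_eq_sum_iff_of_le fun y hy => hmax (htF hy)).1 hsum)

lemma IsFacetOf.exists_smul_eq {K : Set (Euc n)} {a s : Euc n} (hF : IsFacetOf K (faceOf K a))
    (ha : a ≠ 0) (hs : s ∈ (vectorSpan ℝ (faceOf K a))ᗮ) : ∃ c : ℝ, c • a = s := by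
  obtain ⟨-, -, -, hdim⟩ := hF
  set W := vectorSpan ℝ (faceOf K a)
  have haW : a ∈ Wᗮ := mem_orthogonal_vectorSpan_of_inner_eq fun x hx => hx.2
  have : Nontrivial (Euc n) := nontrivial_of_ne a 0 ha
  have hn : 0 < n := by simpa using (Module.finrank_pos : 0 < Module.finrank ℝ (Euc n))
  have hWperp : Module.finrank ℝ Wᗮ = 1 := by
    have := W.finrank_add_finrank_orthogonal
    rw [finrank_euclideanSpace_fin, hdim] at this
    omega
  obtain ⟨c, hc⟩ :=
    (finrank_eq_one_iff_of_nonzero' (⟨a, haW⟩ : Wᗮ) (by simpa using ha)).1 hWperp ⟨s, hs⟩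
  exact ⟨c, congrArg Subtype.val hc⟩

theorem CompleteWrt.two_mul_suppF_eq_of_isFacetOf [Nontrivial (Euc n)] {K C : Set (Euc n)}
    (hcomp : CompleteWrt K C) (hK : IsBody K) (hC : IsCompact C) (hCint : (interior C).Nonempty)
    {a : Euc n} (ha : a ≠ 0) (hfacet : IsFacetOf K (faceOf K a)) (hKa : 0 < suppF (K - K) a) :
    2 * suppF (K - K) a = diamF K C * suppF (C - C) a := by
  have hKcpt := hK.2.1
  have hKne := hK.2.2
  obtain ⟨x, hxF, hx⟩ := (hK.1.faceOf a).exists_forall_isMaxOn_inner_mem_orthogonal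
    (faceOf_nonempty hKcpt hKne a)
  obtain ⟨s, hs, htight⟩ := hcomp.exists_diametral_direction hK hC hCint ha hxF
  have hle := two_mul_suppF_le_diamF_mul hKcpt hC hCint hs
  rw [suppF_sub hKcpt hKne hKcpt hKne] at hle
  have hxs : inner ℝ s x = suppF K s :=
    le_antisymm (inner_le_suppF hKcpt hxF.1 s) (by linarith)
  have hdiam : 2 * (suppF K s + suppF K (-s)) = diamF K C * suppF (C - C) s := by linarith
  obtain ⟨c, rfl⟩ := hfacet.exists_smul_eq ha
    (hx s fun y hy => (inner_le_suppF hKcpt hy.1 s).trans_eq hxs.symm)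
  rcases lt_trichotomy c 0 with hc | rfl | hc
  · rw [← neg_neg c, neg_smul, ← smul_neg, suppF_smul _ (neg_nonneg.2 hc.le),
      real_inner_smul_left] at hxs
    have hxna : inner ℝ (-a) x = suppF K (-a) := mul_left_cancel₀ (neg_ne_zero.2 hc.ne) hxs
    rw [suppF_sub hKcpt hKne hKcpt hKne, ← hxF.2, ← hxna, inner_neg_left, add_neg_cancel] at hKa
    exact (lt_irrefl 0 hKa).elim
  · exact absurd (zero_smul ℝ a) hs
  · rw [← smul_neg, suppF_smul _ hc.le, suppF_smul _ hc.le, suppF_smul _ hc.le] at hdiam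
    rw [suppF_sub hKcpt hKne hKcpt hKne]
    exact mul_left_cancel₀ hc.ne' (by linarith)

end Facets

theorem extreme_point_in_parallel_facet_constWidth_general {n : ℕ} (C K : Set (Euc n))
    (hCpoly : IsPolytope C) (hsym : C = -C) (hCint : (interior C).Nonempty)
    (hK : IsBody K) (hcomp : CompleteWrt K C) (hred : ReducedWrt K C)
    (v : Euc n) (hv : v ∈ Set.extremePoints ℝ (widthF K C • C))
    (a : Euc n) (ha : a ≠ 0)
    (hvF : v ∈ faceOf (K - K) a)
    (haK : IsFacetOf K (faceOf K a)) :
    ConstWidthWrt K C := by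
  have hC : IsCompact C := by
    obtain ⟨V, rfl⟩ := hCpoly
    exact V.finite_toSet.isCompact_convexHull ℝ
  have : Nontrivial (Euc n) := nontrivial_of_ne a 0 ha
  obtain ⟨x, rfl⟩ | hKnt := hK.2.2.exists_eq_singleton_or_nontrivial
  · exact constWidthWrt_singleton x C
  obtain ⟨x, hx⟩ := hKnt.nonempty
  have hw : 0 < widthF K C := widthF_singleton x C ▸ hred {x}
    ⟨convex_singleton x, isCompact_singleton, Set.singleton_nonempty x⟩
    (Set.ssubset_iff_subset_ne.2 ⟨Set.singleton_subset_iff.2 hx, (hKnt.ne_singleton ·.symm)⟩)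
  have hCa := suppF_sub_self_pos hC hCint ha
  have hwidth_le := two_mul_suppF_le_of_mem_faceOf hC hsym hw.le hv.1 hvF
  have hle_width := widthF_mul_le_two_mul_suppF hK.2.1 hK.2.2 hC hCint ha
  have hdiam := hcomp.two_mul_suppF_eq_of_isFacetOf hK hC hCint ha haK
    (by linarith [mul_pos hw hCa])
  exact mul_right_cancel₀ hCa.ne' (by linarith)

/-- if some extreme point of `w(K,C)•C` lies in a facet of `K - K`
whose outer normal is also an outer normal of a facet of `K`, then the complete and
reduced body `K` is of constant width. -/
theorem extreme_point_in_parallel_facet_constWidth {n : ℕ} (C K : Set (Euc n))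
    (hCpoly : IsPolytope C) (hsym : C = -C) (hCint : (interior C).Nonempty)
    (hK : IsBody K) (hcomp : CompleteWrt K C) (hred : ReducedWrt K C)
    (v : Euc n) (hv : v ∈ Set.extremePoints ℝ (widthF K C • C))
    (a : Euc n) (ha : a ≠ 0)
    (hFfacet : IsFacetOf (K - K) (faceOf (K - K) a))
    (hvF : v ∈ faceOf (K - K) a)
    (haK : IsFacetOf K (faceOf K a)) :
    ConstWidthWrt K C :=
  extreme_point_in_parallel_facet_constWidth_general C K hCpoly hsym hCint hK hcomp hred v hv a ha
    hvF haK
end
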